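/- arXiv:1407.3306 — 4 statements merged into one kernel-verified Lean document; each statement's English description precedes it below -/
import Mathlib

section
/- Let Λ be a complete metric space and suppose: (L1) for each λ ∈ Λ, S_λ is a semigroup on a metric space X with global attractor 𝒜_λ; (L2) there is a bounded set D ⊆ X with 𝒜_λ ⊆ D for all λ; (L3) for each t > 0, λ ↦ S_λ(t)x is continuous uniformly for x in bounded subsets of X. If there exists a sequence t_n → ∞ such that sup_{λ∈Λ} ρ_X(S_λ(t_n)D, 𝒜_λ) → 0 as n → ∞, then the map λ ↦ 𝒜_λ is continuous from Λ to the space of compact subsets of X with the Hausdorff metric, at every point of Λ. -/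
open Filter Topology EMetric

/-- The Hausdorff semidistance `ρ(A,B) = sup_{a ∈ A} inf_{b ∈ B} d(a,b)`. -/
noncomputable def rho {X : Type*} [MetricSpace X] (A B : Set X) : ENNReal :=
  ⨆ a ∈ A, infEdist a B

/-- A semigroup (semiflow) on a metric space `X`. -/
structure Semiflow (X : Type*) [MetricSpace X] where
  S : ℝ → X → X
  map_zero : ∀ x, S 0 x = x
  map_add : ∀ t s : ℝ, 0 ≤ t → 0 ≤ s → ∀ x, S (t + s) x = S t (S s x)
  cont : Continuous fun p : ℝ × X => S p.1 p.2

/-- `A` is the global attractor of the semigroup `σ`: a compact invariant set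
attracting every bounded set in the Hausdorff semidistance. -/
def IsGlobalAttractor {X : Type*} [MetricSpace X] (σ : Semiflow X) (A : Set X) : Prop :=
  IsCompact A ∧ (∀ t : ℝ, 0 ≤ t → σ.S t '' A = A) ∧
    ∀ B : Set X, Bornology.IsBounded B →
      Tendsto (fun t : ℝ => rho (σ.S t '' B) A) atTop (𝓝 0)

/-- Equi-attraction along a sequence of times implies continuity of the
attractors: under (L1)–(L3), if `sup_λ ρ(S_λ(t_n)D, 𝒜_λ) → 0` for some
sequence `t_n → ∞`, then `λ ↦ 𝒜_λ` is continuous (in the Hausdorff metric on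
compact sets, expressed via the Hausdorff extended distance) at every point. -/
theorem continuity_of_attractors_of_equi_attraction {Λ X : Type*} [MetricSpace Λ]
    [CompleteSpace Λ] [MetricSpace X] (S : Λ → Semiflow X) (𝒜 : Λ → Set X)
    (D : Set X)
    (hL1 : ∀ l : Λ, IsGlobalAttractor (S l) (𝒜 l))
    (hL2 : Bornology.IsBounded D ∧ ∀ l : Λ, 𝒜 l ⊆ D)
    (hL3 : ∀ t : ℝ, 0 < t → ∀ B : Set X, Bornology.IsBounded B → ∀ l₀ : Λ,
      ∀ ε : ℝ, 0 < ε → ∃ δ : ℝ, 0 < δ ∧ ∀ l : Λ, dist l l₀ < δ →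
        ∀ x ∈ B, dist ((S l).S t x) ((S l₀).S t x) < ε)
    (tseq : ℕ → ℝ) (htseq : Tendsto tseq atTop atTop)
    (hequi : Tendsto (fun n => ⨆ l : Λ, rho ((S l).S (tseq n) '' D) (𝒜 l))
      atTop (𝓝 0)) :
    ∀ l₀ : Λ, Tendsto (fun l => hausdorffEdist (𝒜 l) (𝒜 l₀)) (𝓝 l₀) (𝓝 0) := by
  intro l₀
  rw [ENNReal.tendsto_nhds_zero]
  intro ε hε
  set r : ENNReal := min 1 (ε / 2) with hr
  have hr0 : 0 < r := lt_min one_pos (ENNReal.half_pos hε.ne')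
  have hrtop : r ≠ ⊤ := ne_top_of_le_ne_top ENNReal.one_ne_top (min_le_left _ _)
  have h2r : r + r ≤ ε := by
    calc r + r ≤ ε / 2 + ε / 2 := add_le_add (min_le_right _ _) (min_le_right _ _)
    _ = ε := ENNReal.add_halves ε
  set ε' : ℝ := r.toReal with hε'def
  have hε' : 0 < ε' := ENNReal.toReal_pos hr0.ne' hrtop
  have hofReal : ENNReal.ofReal ε' = r := ENNReal.ofReal_toReal hrtop
  have hev := (hequi.eventually_lt_const hr0).and (htseq.eventually_gt_atTop 0)
  obtain ⟨n, hsup, ht⟩ := hev.exists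
  set t := tseq n with htdef
  have hrho : ∀ l' : Λ, ∀ x ∈ D, infEdist ((S l').S t x) (𝒜 l') ≤ r := by
    intro l' x hx
    have h1 : infEdist ((S l').S t x) (𝒜 l') ≤ rho ((S l').S t '' D) (𝒜 l') :=
      le_iSup₂_of_le ((S l').S t x) (Set.mem_image_of_mem _ hx) le_rfl
    exact h1.trans ((le_iSup (fun l => rho ((S l).S t '' D) (𝒜 l)) l').trans hsup.le)
  obtain ⟨δ, hδ, hδ'⟩ := hL3 t ht D hL2.1 l₀ ε' hε'
  filter_upwards [Metric.ball_mem_nhds l₀ hδ] with l hl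
  rw [Metric.mem_ball] at hl
  refine le_trans (hausdorffEdist_le_of_infEdist ?_ ?_) h2r
  · intro a ha
    rw [← (hL1 l).2.1 t ht.le] at ha
    obtain ⟨x, hxA, rfl⟩ := ha
    have hxD : x ∈ D := hL2.2 l hxA
    calc infEdist ((S l).S t x) (𝒜 l₀)
        ≤ edist ((S l).S t x) ((S l₀).S t x) + infEdist ((S l₀).S t x) (𝒜 l₀) :=
          infEdist_le_edist_add_infEdist
      _ ≤ r + r := by
          refine add_le_add ?_ (hrho l₀ x hxD)
          rw [edist_dist, ← hofReal]
          exact ENNReal.ofReal_le_ofReal (hδ' l hl x hxD).le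
  · intro a ha
    rw [← (hL1 l₀).2.1 t ht.le] at ha
    obtain ⟨x, hxA, rfl⟩ := ha
    have hxD : x ∈ D := hL2.2 l₀ hxA
    calc infEdist ((S l₀).S t x) (𝒜 l)
        ≤ edist ((S l₀).S t x) ((S l).S t x) + infEdist ((S l).S t x) (𝒜 l) :=
          infEdist_le_edist_add_infEdist
      _ ≤ r + r := by
          refine add_le_add ?_ (hrho l x hxD)
          rw [edist_dist, dist_comm, ← hofReal]
          exact ENNReal.ofReal_le_ofReal (hδ' l hl x hxD).le
end

section
/- Let Λ be a compact metric space, and suppose (L1)–(L3) hold: each S_λ is a semigroup on X with global attractor 𝒜_λ, all attractors are contained in a fixed bounded set D, and for each t > 0 the map λ ↦ S_λ(t)x is continuous uniformly for x in bounded sets. If λ ↦ 𝒜_λ is continuous (in the Hausdorff metric) at every λ ∈ Λ, then there exists a sequence t_n → ∞ such that sup_{λ∈Λ} d_H(S_λ(t_n)D, 𝒜_λ) → 0 as n → ∞ (equi-attraction along a sequence of times). -/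
open Filter Topology EMetric

/-!
Let `D₁` be the open `1`-neighbourhood of `D`. Near each `λ₀`, attraction of `D₁` by
`𝒜 λ₀ ⊆ D` together with (L3) yields an integer time `n` with `S_λ(n) D₁ ⊆ D₁`; by compactness
of `Λ` the product `N` of finitely many such times works for every `λ`. Then
`g_m(λ) = ρ(S_λ((m+1)N) D₁, 𝒜_λ)` decreases in `m`, tends to `0` pointwise, and is upper
semicontinuous in `λ` by (L3) and the continuity of `λ ↦ 𝒜_λ`, so Dini's argument on the compact
space `Λ` makes the convergence uniform. Finally `d_H(S_λ(t) D, 𝒜_λ) ≤ g_m(λ)` for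
`t = (m+1)N`, since `𝒜_λ = S_λ(t) 𝒜_λ ⊆ S_λ(t) D`.
-/

section Rho

variable {X : Type*} [MetricSpace X] {A A' B B' C : Set X}

lemma infEDist_le_rho {a : X} (ha : a ∈ A) : Metric.infEDist a B ≤ rho A B :=
  le_iSup₂ (f := fun a (_ : a ∈ A) => Metric.infEDist a B) a ha

lemma rho_le {r : ENNReal} (h : ∀ a ∈ A, Metric.infEDist a B ≤ r) : rho A B ≤ r :=
  iSup₂_le h

lemma rho_mono_left (h : A' ⊆ A) : rho A' B ≤ rho A B :=
  rho_le fun _ ha => infEDist_le_rho (h ha)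

lemma rho_anti_right (h : B ⊆ B') : rho A B' ≤ rho A B :=
  rho_le fun _ ha => (Metric.infEDist_anti h).trans (infEDist_le_rho ha)

lemma rho_le_rho_add_hausdorffEDist : rho C A ≤ rho C A' + Metric.hausdorffEDist A' A :=
  rho_le fun _ hc => Metric.infEDist_le_infEDist_add_hausdorffEDist.trans
    (add_le_add (infEDist_le_rho hc) le_rfl)

lemma rho_image_le_add {f g : X → X} {ε : ENNReal} (hfg : ∀ x ∈ B, edist (f x) (g x) ≤ ε) :
    rho (f '' B) A ≤ ε + rho (g '' B) A := by
  refine rho_le ?_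
  rintro _ ⟨x, hx, rfl⟩
  exact Metric.infEDist_le_edist_add_infEDist.trans
    (add_le_add (hfg x hx) (infEDist_le_rho (Set.mem_image_of_mem g hx)))

lemma hausdorffEDist_le_rho_of_subset (h : B ⊆ A) : Metric.hausdorffEDist A B ≤ rho A B :=
  Metric.hausdorffEDist_le_of_infEDist (fun _ ha => infEDist_le_rho ha)
    fun _ hb => (Metric.infEDist_zero_of_mem (h hb)).trans_le zero_le

lemma mapsTo_thickening_of_rho_image_lt {f : X → X} {δ : ℝ}
    (h : rho (f '' B) A < ENNReal.ofReal δ) : Set.MapsTo f B (Metric.thickening δ A) :=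
  fun _ hx => Metric.mem_thickening_iff_infEDist_lt.2
    ((infEDist_le_rho (Set.mem_image_of_mem f hx)).trans_lt h)

end Rho

namespace Semiflow

variable {X : Type*} [MetricSpace X] (σ : Semiflow X) {B : Set X}

lemma antitone_image_natCast_mul {a : ℝ} (ha : 0 ≤ a) (hB : Set.MapsTo (σ.S a) B B) :
    Antitone fun k : ℕ => σ.S (k * a) '' B := by
  refine antitone_nat_of_succ_le fun k => ?_
  have hka : 0 ≤ (k : ℝ) * a := by positivity
  rintro _ ⟨x, hx, rfl⟩
  refine ⟨σ.S a x, hB hx, ?_⟩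
  rw [Nat.cast_succ, add_one_mul, σ.map_add _ _ hka ha]

lemma mapsTo_of_dvd {n N : ℕ} (hB : Set.MapsTo (σ.S n) B B) (h : n ∣ N) :
    Set.MapsTo (σ.S N) B B := by
  obtain ⟨k, rfl⟩ := h
  have hsub : σ.S (k * n) '' B ⊆ σ.S ((0 : ℕ) * n) '' B :=
    σ.antitone_image_natCast_mul (Nat.cast_nonneg n) hB (Nat.zero_le k)
  rw [Nat.cast_zero, zero_mul, Set.image_congr fun x _ => σ.map_zero x, Set.image_id'] at hsub
  rw [Set.mapsTo_iff_image_subset, Nat.cast_mul, mul_comm]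
  exact hsub

end Semiflow

lemma exists_pos_forall_of_forall_eventually {Λ : Type*} [TopologicalSpace Λ] [CompactSpace Λ]
    {P : ℕ → Λ → Prop} (hP : ∀ {n N : ℕ} {l : Λ}, n ∣ N → P n l → P N l)
    (h : ∀ l₀, ∃ n, 0 < n ∧ ∀ᶠ l in 𝓝 l₀, P n l) : ∃ N, 0 < N ∧ ∀ l, P N l := by
  choose n hn hP_nhds using h
  obtain ⟨t, -, hcover⟩ :=
    isCompact_univ.elim_nhds_subcover (fun l₀ => {l | P (n l₀) l}) fun l₀ _ => hP_nhds l₀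
  refine ⟨∏ i ∈ t, n i, Finset.prod_pos fun i _ => hn i, fun l => ?_⟩
  obtain ⟨i, hi, hl⟩ := Set.mem_iUnion₂.1 (hcover (Set.mem_univ l))
  exact hP (Finset.dvd_prod_of_mem n hi) hl

lemma tendsto_iSup_of_antitone_of_upperSemicontinuous {α : Type*} [TopologicalSpace α]
    [CompactSpace α] {f : ℕ → α → ENNReal} (hanti : ∀ x, Antitone (f · x))
    (husc : ∀ n, UpperSemicontinuous (f n)) (hlim : ∀ x, Tendsto (f · x) atTop (𝓝 0)) :
    Tendsto (fun n => ⨆ x, f n x) atTop (𝓝 0) := by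
  refine ENNReal.tendsto_atTop_zero.2 fun ε hε => ?_
  have hcover : Set.univ ⊆ ⋃ n, f n ⁻¹' Set.Iio ε := fun x _ =>
    Set.mem_iUnion.2 ((hlim x).eventually_lt_const hε).exists
  obtain ⟨t, ht⟩ := isCompact_univ.elim_finite_subcover _
    (fun n => upperSemicontinuous_iff_isOpen_preimage.1 (husc n) ε) hcover
  refine ⟨t.sup id, fun n hn => iSup_le fun x => ?_⟩
  obtain ⟨i, hi, hx⟩ := Set.mem_iUnion₂.1 (ht (Set.mem_univ x))
  exact (hanti x ((Finset.le_sup (f := id) hi).trans hn)).trans (le_of_lt hx)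

section Parametrized

variable {Λ X : Type*} [TopologicalSpace Λ] [MetricSpace X]

lemma upperSemicontinuous_rho_image {F : Λ → X → X} {A : Λ → Set X} {B : Set X}
    (hF : ∀ l₀, TendstoUniformlyOn F (F l₀) (𝓝 l₀) B)
    (hA : ∀ l₀, Tendsto (fun l => Metric.hausdorffEDist (A l) (A l₀)) (𝓝 l₀) (𝓝 0)) :
    UpperSemicontinuous fun l => rho (F l '' B) (A l) := by
  intro l₀ y hy
  obtain ⟨r, hr, hry⟩ := ENNReal.lt_iff_exists_add_pos_lt.1 hy
  have hr2 : (0 : ENNReal) < r / 2 := ENNReal.half_pos (by exact_mod_cast hr.ne')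
  filter_upwards [EMetric.tendstoUniformlyOn_iff.1 (hF l₀) _ hr2,
    (hA l₀).eventually_lt_const hr2] with l hFl hAl
  calc rho (F l '' B) (A l)
      ≤ rho (F l '' B) (A l₀) + Metric.hausdorffEDist (A l₀) (A l) :=
        rho_le_rho_add_hausdorffEDist
    _ ≤ r / 2 + rho (F l₀ '' B) (A l₀) + Metric.hausdorffEDist (A l) (A l₀) := by
        rw [Metric.hausdorffEDist_comm]
        gcongr
        exact rho_image_le_add fun x hx => (edist_comm _ _).trans_le (hFl x hx).le
    _ < r / 2 + rho (F l₀ '' B) (A l₀) + r / 2 := ENNReal.add_lt_add_left (by finiteness) hAl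
    _ = rho (F l₀ '' B) (A l₀) + r := by
        rw [add_comm ((r : ENNReal) / 2), add_assoc, ENNReal.add_halves]
    _ < y := hry

lemma Semiflow.exists_nat_eventually_mapsTo_thickening {S : Λ → Semiflow X} {A D : Set X}
    {l₀ : Λ} {δ : ℝ} (hδ : 0 < δ) (hAD : A ⊆ D)
    (hattr : Tendsto (fun t => rho ((S l₀).S t '' Metric.thickening δ D) A) atTop (𝓝 0))
    (hunif : ∀ t : ℝ, 0 < t →
      TendstoUniformlyOn (fun l => (S l).S t) ((S l₀).S t) (𝓝 l₀) (Metric.thickening δ D)) :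
    ∃ n : ℕ, 0 < n ∧ ∀ᶠ l in 𝓝 l₀,
      Set.MapsTo ((S l).S n) (Metric.thickening δ D) (Metric.thickening δ D) := by
  set B := Metric.thickening δ D
  have hε : (0 : ENNReal) < ENNReal.ofReal δ / 2 :=
    ENNReal.half_pos (ENNReal.ofReal_pos.2 hδ).ne'
  obtain ⟨n, hn, hpos⟩ := (((hattr.comp tendsto_natCast_atTop_atTop).eventually_lt_const hε).and
    (eventually_gt_atTop 0)).exists
  refine ⟨n, hpos, ?_⟩
  filter_upwards [EMetric.tendstoUniformlyOn_iff.1 (hunif n (by exact_mod_cast hpos)) _ hε]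
    with l hl
  refine mapsTo_thickening_of_rho_image_lt ?_
  calc rho ((S l).S n '' B) D
      ≤ ENNReal.ofReal δ / 2 + rho ((S l₀).S n '' B) D :=
        rho_image_le_add fun x hx => (edist_comm _ _).trans_le (hl x hx).le
    _ ≤ ENNReal.ofReal δ / 2 + rho ((S l₀).S n '' B) A := by gcongr; exact rho_anti_right hAD
    _ < ENNReal.ofReal δ / 2 + ENNReal.ofReal δ / 2 :=
        ENNReal.add_lt_add_left (by finiteness) hn
    _ = ENNReal.ofReal δ := ENNReal.add_halves _

end Parametrized

/-- Converse: if `Λ` is compact and the attractors `𝒜_λ` vary continuously in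
`λ` (Hausdorff metric), then there is a sequence of times `t_n → ∞` along which
the attraction `sup_λ d_H(S_λ(t_n)D, 𝒜_λ) → 0` is uniform in `λ`. -/
theorem equi_attraction_of_continuity {Λ X : Type*} [MetricSpace Λ]
    [CompactSpace Λ] [MetricSpace X] (S : Λ → Semiflow X) (𝒜 : Λ → Set X)
    (D : Set X)
    (hL1 : ∀ l : Λ, IsGlobalAttractor (S l) (𝒜 l))
    (hL2 : Bornology.IsBounded D ∧ ∀ l : Λ, 𝒜 l ⊆ D)
    (hL3 : ∀ t : ℝ, 0 < t → ∀ B : Set X, Bornology.IsBounded B → ∀ l₀ : Λ,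
      ∀ ε : ℝ, 0 < ε → ∃ δ : ℝ, 0 < δ ∧ ∀ l : Λ, dist l l₀ < δ →
        ∀ x ∈ B, dist ((S l).S t x) ((S l₀).S t x) < ε)
    (hcont : ∀ l₀ : Λ, Tendsto (fun l => hausdorffEdist (𝒜 l) (𝒜 l₀)) (𝓝 l₀) (𝓝 0)) :
    ∃ tseq : ℕ → ℝ, Tendsto tseq atTop atTop ∧
      Tendsto (fun n => ⨆ l : Λ, hausdorffEdist ((S l).S (tseq n) '' D) (𝒜 l))
        atTop (𝓝 0) := by
  obtain ⟨hDb, hAD⟩ := hL2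
  set D₁ := Metric.thickening 1 D
  have hD₁b : Bornology.IsBounded D₁ := hDb.thickening
  have hunif : ∀ t : ℝ, 0 < t → ∀ l₀,
      TendstoUniformlyOn (fun l => (S l).S t) ((S l₀).S t) (𝓝 l₀) D₁ := fun t ht l₀ =>
    Metric.tendstoUniformlyOn_iff.2 fun ε hε => by
      obtain ⟨δ, hδ, hl⟩ := hL3 t ht D₁ hD₁b l₀ ε hε
      filter_upwards [Metric.ball_mem_nhds l₀ hδ] with l hl' x hx
      rw [dist_comm]
      exact hl l hl' x hx
  obtain ⟨N, hN, hinv⟩ := exists_pos_forall_of_forall_eventually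
    (P := fun n l => Set.MapsTo ((S l).S n) D₁ D₁) (fun h hl => (S _).mapsTo_of_dvd hl h)
    fun l₀ => Semiflow.exists_nat_eventually_mapsTo_thickening one_pos (hAD l₀)
      ((hL1 l₀).2.2 D₁ hD₁b) fun t ht => hunif t ht l₀
  have htime : Tendsto (fun m : ℕ => ((m + 1 : ℕ) : ℝ) * N) atTop atTop :=
    (tendsto_natCast_atTop_atTop.comp (tendsto_add_atTop_nat 1)).atTop_mul_const
      (by exact_mod_cast hN)
  have hdini := tendsto_iSup_of_antitone_of_upperSemicontinuous
    (f := fun m l => rho ((S l).S (((m + 1 : ℕ) : ℝ) * N) '' D₁) (𝒜 l))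
    (fun l _ _ hmk => rho_mono_left <| (S l).antitone_image_natCast_mul (Nat.cast_nonneg N)
      (hinv l) (Nat.succ_le_succ hmk))
    (fun m => upperSemicontinuous_rho_image (fun l₀ => hunif _ (by positivity) l₀) hcont)
    fun l => ((hL1 l).2.2 D₁ hD₁b).comp htime
  refine ⟨_, htime, tendsto_of_tendsto_of_tendsto_of_le_of_le tendsto_const_nhds hdini
    (fun _ => zero_le) fun m => iSup_mono fun l => ?_⟩
  have hinvariant := (hL1 l).2.1 (((m + 1 : ℕ) : ℝ) * N) (by positivity)
  calc Metric.hausdorffEDist ((S l).S (((m + 1 : ℕ) : ℝ) * N) '' D) (𝒜 l)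
      ≤ rho ((S l).S (((m + 1 : ℕ) : ℝ) * N) '' D) (𝒜 l) :=
        hausdorffEDist_le_rho_of_subset (hinvariant ▸ Set.image_mono (hAD l))
    _ ≤ rho ((S l).S (((m + 1 : ℕ) : ℝ) * N) '' D₁) (𝒜 l) :=
        rho_mono_left (Set.image_mono (Metric.self_subset_thickening one_pos D))
end

section
/- Under hypotheses (L1)–(L3) — each S_λ a semigroup on X with global attractor 𝒜_λ, all attractors contained in a fixed bounded set D, and for each t > 0 the map λ ↦ S_λ(t)x continuous uniformly for x in bounded subsets of X, with Λ a complete metric space — the map λ ↦ 𝒜_λ, from Λ into the space of compact subsets of X with the Hausdorff metric, is continuous at every point of a residual subset of Λ. In particular, the set of continuity points is dense in Λ. -/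
open Filter Topology EMetric

/-!
The time-`n` images `closure (S_λ(n+1) D)` depend continuously on `λ` (uniformly in `x ∈ D`,
by (L3)) and, because `𝒜_λ ⊆ S_λ(t) D`, converge to `𝒜_λ` in the Hausdorff metric. So
`λ ↦ 𝒜_λ` is a pointwise limit of continuous maps from a Baire space, and such a limit is
continuous on a residual set: given `ε`, the closed sets where the sequence has settled
within `ε` from index `n` on cover `Λ`, so by Baire their interiors have dense union, and
on the interior of one of them the limit oscillates by at most `3ε`.
-/

open TopologicalSpace Set Metric
open scoped ENNReal

section BaireOne

variable {Λ α : Type*} [PseudoEMetricSpace α] {F : ℕ → Λ → α} {G : Λ → α} {ε : ℝ≥0∞} {n : ℕ}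

def settledSet (F : ℕ → Λ → α) (ε : ℝ≥0∞) (n : ℕ) : Set Λ :=
  {l | ∀ m ≥ n, edist (F m l) (F n l) ≤ ε}

theorem iUnion_settledSet_eq_univ (hF : ∀ l, CauchySeq (F · l)) (hε : 0 < ε) :
    ⋃ n, settledSet F ε n = univ := by
  refine eq_univ_of_forall fun l => mem_iUnion.2 ?_
  obtain ⟨n, hn⟩ := EMetric.cauchySeq_iff'.1 (hF l) ε hε
  exact ⟨n, fun m hm => (hn m hm).le⟩

theorem edist_le_of_mem_settledSet {l : Λ} (hG : Tendsto (F · l) atTop (𝓝 (G l)))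
    (hl : l ∈ settledSet F ε n) : edist (G l) (F n l) ≤ ε :=
  le_of_tendsto (hG.edist tendsto_const_nhds) (eventually_atTop.2 ⟨n, hl⟩)

variable [TopologicalSpace Λ]

theorem isClosed_settledSet (hF : ∀ n, Continuous (F n)) : IsClosed (settledSet F ε n) := by
  simp only [settledSet, ofPred_forall]
  exact isClosed_iInter fun m => isClosed_iInter fun _ =>
    isClosed_le ((hF m).edist (hF n)) continuous_const

theorem eventually_edist_le_of_mem_interior_settledSet {l₀ : Λ} (hFn : Continuous (F n))
    (hG : ∀ l, Tendsto (F · l) atTop (𝓝 (G l))) (hε : 0 < ε)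
    (hl₀ : l₀ ∈ interior (settledSet F ε n)) :
    ∀ᶠ l in 𝓝 l₀, edist (G l) (G l₀) ≤ 3 * ε := by
  filter_upwards [mem_interior_iff_mem_nhds.1 hl₀,
    EMetric.continuousAt_iff'.1 hFn.continuousAt ε hε] with l hl hFl
  have hGl₀ : edist (F n l₀) (G l₀) ≤ ε :=
    edist_comm (G l₀) (F n l₀) ▸ edist_le_of_mem_settledSet (hG l₀) (interior_subset hl₀)
  calc edist (G l) (G l₀)
      ≤ edist (G l) (F n l) + edist (F n l) (F n l₀) + edist (F n l₀) (G l₀) :=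
        edist_triangle4 _ _ _ _
    _ ≤ ε + ε + ε :=
        add_le_add (add_le_add (edist_le_of_mem_settledSet (hG l) hl) hFl.le) hGl₀
    _ = 3 * ε := by ring

theorem residual_setOf_continuousAt_of_tendsto [BaireSpace Λ] (hF : ∀ n, Continuous (F n))
    (hG : ∀ l, Tendsto (F · l) atTop (𝓝 (G l))) : {l | ContinuousAt G l} ∈ residual Λ := by
  have hpos (k : ℕ) : 0 < (k : ℝ≥0∞)⁻¹ := ENNReal.inv_pos.2 (ENNReal.natCast_ne_top k)
  have hres : (⋂ k : ℕ, ⋃ n, interior (settledSet F (k : ℝ≥0∞)⁻¹ n)) ∈ residual Λ :=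
    countable_iInter_mem.2 fun k =>
      residual_of_dense_open (isOpen_iUnion fun _ => isOpen_interior)
        (dense_iUnion_interior_of_closed (fun _ => isClosed_settledSet hF)
          (iUnion_settledSet_eq_univ (fun l => (hG l).cauchySeq) (hpos k)))
  refine mem_of_superset hres fun l₀ hl₀ => EMetric.continuousAt_iff'.2 fun ε hε => ?_
  have hε3 : ε / 3 ≠ 0 := (ENNReal.div_pos hε.ne' (by norm_num)).ne'
  obtain ⟨k, hk⟩ := ENNReal.exists_inv_nat_lt hε3
  obtain ⟨n, hn⟩ := mem_iUnion.1 (mem_iInter.1 hl₀ k)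
  filter_upwards [eventually_edist_le_of_mem_interior_settledSet (hF n) hG (hpos k) hn]
    with l hl
  exact hl.trans_lt (ENNReal.mul_lt_of_lt_div' hk)

end BaireOne

theorem hausdorffEDist_image_le {Y X : Type*} [PseudoEMetricSpace X] {f g : Y → X} {D : Set Y}
    {r : ℝ≥0∞} (h : ∀ x ∈ D, edist (f x) (g x) ≤ r) : hausdorffEDist (f '' D) (g '' D) ≤ r := by
  refine hausdorffEDist_le_of_mem_edist ?_ ?_ <;> rintro _ ⟨x, hx, rfl⟩
  · exact ⟨g x, mem_image_of_mem g hx, h x hx⟩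
  · exact ⟨f x, mem_image_of_mem f hx, edist_comm (f x) (g x) ▸ h x hx⟩

theorem continuous_closeds_closure_image {Λ Y X : Type*} [TopologicalSpace Λ] [EMetricSpace X]
    {f : Λ → Y → X} {D : Set Y} (hf : ∀ l₀, TendstoUniformlyOn f (f l₀) (𝓝 l₀) D) :
    Continuous fun l => Closeds.closure (f l '' D) := by
  refine continuous_iff_continuousAt.2 fun l₀ => EMetric.continuousAt_iff'.2 fun ε hε => ?_
  obtain ⟨r, hr, hrε⟩ := exists_between hε
  filter_upwards [EMetric.tendstoUniformlyOn_iff.1 (hf l₀) r hr] with l hl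
  rw [TopologicalSpace.Closeds.edist_eq, Closeds.coe_closure, Closeds.coe_closure,
    hausdorffEDist_closure]
  refine (hausdorffEDist_image_le fun x hx => ?_).trans_lt hrε
  exact (edist_comm (f l₀ x) (f l x) ▸ hl x hx).le

theorem hausdorffEDist_eq_rho_of_subset {X : Type*} [MetricSpace X] {A B : Set X} (h : B ⊆ A) :
    hausdorffEDist A B = rho A B := by
  have hBA : ⨆ b ∈ B, infEDist b A = 0 :=
    le_antisymm (iSup₂_le fun b hb => (infEDist_zero_of_mem (h hb)).le) zero_le
  rw [hausdorffEDist_def, hBA, max_eq_left zero_le]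
  rfl

theorem IsGlobalAttractor.tendsto_hausdorffEDist_image {X : Type*} [MetricSpace X]
    {σ : Semiflow X} {A D : Set X} (hA : IsGlobalAttractor σ A) (hD : Bornology.IsBounded D)
    (hAD : A ⊆ D) : Tendsto (fun t => hausdorffEDist (σ.S t '' D) A) atTop (𝓝 0) := by
  refine (hA.2.2 D hD).congr' ?_
  filter_upwards [eventually_ge_atTop 0] with t ht
  rw [hausdorffEDist_eq_rho_of_subset (hA.2.1 t ht ▸ image_mono hAD)]

/-- Main theorem: under (L1)–(L3), with `Λ` a complete metric space, the map
`λ ↦ 𝒜_λ` into the compact subsets of `X` with the Hausdorff metric is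
continuous at every point of a residual subset of `Λ`; in particular the set
of continuity points is dense. -/
theorem residual_continuity_of_attractors {Λ X : Type*} [MetricSpace Λ]
    [CompleteSpace Λ] [MetricSpace X] (S : Λ → Semiflow X) (𝒜 : Λ → Set X)
    (D : Set X)
    (hL1 : ∀ l : Λ, IsGlobalAttractor (S l) (𝒜 l))
    (hL2 : Bornology.IsBounded D ∧ ∀ l : Λ, 𝒜 l ⊆ D)
    (hL3 : ∀ t : ℝ, 0 < t → ∀ B : Set X, Bornology.IsBounded B → ∀ l₀ : Λ,
      ∀ ε : ℝ, 0 < ε → ∃ δ : ℝ, 0 < δ ∧ ∀ l : Λ, dist l l₀ < δ →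
        ∀ x ∈ B, dist ((S l).S t x) ((S l₀).S t x) < ε) :
    {l₀ : Λ | Tendsto (fun l => hausdorffEdist (𝒜 l) (𝒜 l₀)) (𝓝 l₀) (𝓝 0)}
      ∈ residual Λ ∧
    Dense {l₀ : Λ | Tendsto (fun l => hausdorffEdist (𝒜 l) (𝒜 l₀)) (𝓝 l₀) (𝓝 0)} := by
  obtain ⟨hD, hAD⟩ := hL2
  let F : ℕ → Λ → Closeds X := fun n l => Closeds.closure ((S l).S (n + 1) '' D)
  let G : Λ → Closeds X := fun l => ⟨𝒜 l, (hL1 l).1.isClosed⟩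
  have hF (n : ℕ) : Continuous (F n) := by
    refine continuous_closeds_closure_image fun l₀ =>
      Metric.tendstoUniformlyOn_iff.2 fun ε hε => ?_
    obtain ⟨δ, hδ, hclose⟩ := hL3 (n + 1) n.cast_add_one_pos D hD l₀ ε hε
    filter_upwards [Metric.ball_mem_nhds l₀ hδ] with l hl x hx
    exact dist_comm ((S l).S (n + 1) x) _ ▸ hclose l hl x hx
  have hG (l : Λ) : Tendsto (F · l) atTop (𝓝 (G l)) := by
    refine tendsto_iff_edist_tendsto_0.2 ?_
    simp only [F, G, TopologicalSpace.Closeds.edist_eq, Closeds.coe_closure,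
      hausdorffEDist_closure_left]
    exact ((hL1 l).tendsto_hausdorffEDist_image hD (hAD l)).comp
      (tendsto_atTop_add_const_right atTop 1 tendsto_natCast_atTop_atTop)
  have hres := residual_setOf_continuousAt_of_tendsto hF hG
  have hsub : {l | ContinuousAt G l} ⊆
      {l₀ | Tendsto (fun l => hausdorffEDist (𝒜 l) (𝒜 l₀)) (𝓝 l₀) (𝓝 0)} :=
    fun _ => tendsto_iff_edist_tendsto_0.1
  exact ⟨mem_of_superset hres hsub, (dense_of_mem_residual hres).mono hsub⟩
end

section
/- Suppose (L1)–(L3) hold with Λ compact, and in addition S_λ(t)x is continuous in x uniformly in λ ∈ Λ, for x in bounded subsets of X and t ∈ [0,T] for every T > 0. If λ ↦ 𝒜_λ is continuous at every point of Λ, then lim_{t→∞} sup_{λ∈Λ} ρ_X(S_λ(t)D, 𝒜_λ) = 0 (full equi-attraction, with the limit over continuous time t, not just along a sequence). -/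
open Filter Topology EMetric

/-!
Compactness of `Λ`, together with pointwise attraction and the continuity of `λ ↦ S_λ(t)` and
of `λ ↦ 𝒜_λ`, bounds uniformly in `λ` the time `S_λ` needs to bring `B = cthickening 1 D` into
the closed `c`-neighbourhood of `𝒜_λ`. For `c = 1` this gives times `N_λ ≤ H₁` with
`S_λ(N_λ) B ⊆ B`; for `c` below the modulus `δ` of uniform continuity of the `S_λ(τ)`,
`τ ∈ [0, H₁]`, it gives times `M_λ ≤ H₂`. Every `t ≥ H₂` splits as `τ + M_λ + m N_λ` with
`0 ≤ τ < N_λ`, so `S_λ(t) x` is the image under `S_λ(τ)` of a point `δ`-close to `𝒜_λ`, hence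
lies `ε`-close to `S_λ(τ) 𝒜_λ = 𝒜_λ`.
-/

open Metric Set

theorem rho_le_ofReal_iff {X : Type*} [MetricSpace X] {A B : Set X} {c : ℝ} :
    rho A B ≤ ENNReal.ofReal c ↔ A ⊆ cthickening c B := by
  simp only [rho, iSup₂_le_iff, subset_def, mem_cthickening_iff]
  rfl

theorem tendsto_iSup_rho_nhds_zero {ι α X : Type*} [MetricSpace X] {f : Filter α}
    {s : ι → α → Set X} {A : ι → Set X}
    (h : ∀ ε > 0, ∀ᶠ t in f, ∀ i, s i t ⊆ cthickening ε (A i)) :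
    Tendsto (fun t => ⨆ i, rho (s i t) (A i)) f (𝓝 0) := by
  refine ENNReal.tendsto_nhds_zero.2 fun ε hε => ?_
  obtain ⟨r, -, hr, hrε⟩ := ENNReal.lt_iff_exists_real_btwn.1 hε
  filter_upwards [h r (ENNReal.ofReal_pos.1 hr)] with t ht
  exact iSup_le fun i => (rho_le_ofReal_iff.2 (ht i)).trans hrε.le

theorem mapsTo_inter_thickening_cthickening {X Y : Type*} [MetricSpace X] [MetricSpace Y]
    {f : X → Y} {A B : Set X} {A' : Set Y} {δ ε : ℝ} (hA : MapsTo f A A') (hAB : A ⊆ B)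
    (hf : ∀ x ∈ B, ∀ y ∈ B, dist x y < δ → dist (f x) (f y) < ε) :
    MapsTo f (B ∩ thickening δ A) (cthickening ε A') := by
  rintro x ⟨hxB, hxA⟩
  obtain ⟨a, ha, hxa⟩ := mem_thickening_iff.1 hxA
  exact mem_cthickening_of_dist_le _ _ _ _ (hA ha) (hf x hxB a (hAB ha) hxa).le

theorem exists_mem_Ico_eq_add_nat_mul {N x : ℝ} (hN : 0 < N) (hx : 0 ≤ x) :
    ∃ τ ∈ Ico 0 N, ∃ m : ℕ, x = τ + m * N := by
  have hle : (⌊x / N⌋₊ : ℝ) * N ≤ x := (le_div_iff₀ hN).1 (Nat.floor_le (div_nonneg hx hN.le))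
  have hlt : x < (⌊x / N⌋₊ + 1) * N := (div_lt_iff₀ hN).1 (Nat.lt_floor_add_one _)
  exact ⟨x - ⌊x / N⌋₊ * N, ⟨by linarith, by linarith⟩, ⌊x / N⌋₊, by ring⟩

theorem eventually_atTop_forall_of_monotone {Λ α : Type*} [TopologicalSpace Λ]
    [CompactSpace Λ] [SemilatticeSup α] [Nonempty α] {Q : Λ → α → Prop}
    (hQ : ∀ l, Monotone (Q l)) (h : ∀ l₀, ∃ H, ∀ᶠ l in 𝓝 l₀, Q l H) :
    ∀ᶠ H in atTop, ∀ l, Q l H := by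
  have hloc : ∀ l₀, ∀ᶠ p in atTop ×ˢ 𝓝 l₀, Q p.2 p.1 := fun l₀ => by
    obtain ⟨H, hH⟩ := h l₀
    exact ((eventually_ge_atTop H).prod_mk hH).mono fun p hp => hQ p.2 hp.1 hp.2
  have hglob := isCompact_univ.mem_prod_nhdsSet_of_forall fun l₀ _ => hloc l₀
  rw [nhdsSet_univ, prod_top] at hglob
  exact (eventually_comap.1 hglob).mono fun H hH l => hH (H, l) rfl

section UniformAttraction

variable {Λ X : Type*} [TopologicalSpace Λ] [MetricSpace X] {φ : Λ → ℝ → X → X}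
  {A : Λ → Set X} {B : Set X}

theorem exists_pos_eventually_mapsTo_cthickening {l₀ : Λ}
    (hattr : Tendsto (fun t => rho (φ l₀ t '' B) (A l₀)) atTop (𝓝 0))
    (hφ : ∀ t > 0, ∀ ε > 0, ∀ᶠ l in 𝓝 l₀, ∀ x ∈ B, dist (φ l t x) (φ l₀ t x) < ε)
    (hA : Tendsto (fun l => hausdorffEDist (A l) (A l₀)) (𝓝 l₀) (𝓝 0)) {c : ℝ} (hc : 0 < c) :
    ∃ t > 0, ∀ᶠ l in 𝓝 l₀, MapsTo (φ l t) B (cthickening c (A l)) := by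
  have hc3 : 0 < c / 3 := by linarith
  obtain ⟨t, hρ, ht⟩ := ((ENNReal.tendsto_nhds_zero.1 hattr _
    (ENNReal.ofReal_pos.2 hc3)).and (eventually_gt_atTop 0)).exists
  refine ⟨t, ht, ?_⟩
  filter_upwards [hφ t ht _ hc3, hA.eventually (gt_mem_nhds (ENNReal.ofReal_pos.2 hc3))]
    with l hdist hH x hx
  have hA₀ : A l₀ ⊆ cthickening (c / 3) (A l) := fun a ha => mem_cthickening_iff.2 <|
    (infEDist_le_hausdorffEDist_of_mem ha).trans (hausdorffEDist_comm.trans_lt hH).le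
  have h₀ : φ l₀ t x ∈ cthickening (c / 3 + c / 3) (A l) :=
    cthickening_cthickening_subset hc3.le hc3.le _ <|
      cthickening_subset_of_subset _ hA₀ (rho_le_ofReal_iff.1 hρ (mem_image_of_mem _ hx))
  have h : φ l t x ∈ cthickening (c / 3 + (c / 3 + c / 3)) (A l) :=
    cthickening_cthickening_subset hc3.le (by positivity) _ <|
      mem_cthickening_of_dist_le _ _ _ _ h₀ (hdist x hx).le
  rwa [show c / 3 + (c / 3 + c / 3) = c by ring] at h

theorem eventually_atTop_forall_exists_mapsTo_cthickening [CompactSpace Λ]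
    (hattr : ∀ l, Tendsto (fun t => rho (φ l t '' B) (A l)) atTop (𝓝 0))
    (hφ : ∀ l₀, ∀ t > 0, ∀ ε > 0, ∀ᶠ l in 𝓝 l₀, ∀ x ∈ B, dist (φ l t x) (φ l₀ t x) < ε)
    (hA : ∀ l₀, Tendsto (fun l => hausdorffEDist (A l) (A l₀)) (𝓝 l₀) (𝓝 0))
    {c : ℝ} (hc : 0 < c) :
    ∀ᶠ H in atTop, ∀ l, ∃ t ∈ Ioc 0 H, MapsTo (φ l t) B (cthickening c (A l)) := by
  refine eventually_atTop_forall_of_monotone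
    (fun l H H' hH ⟨t, ht, hmaps⟩ => ⟨t, Ioc_subset_Ioc_right hH ht, hmaps⟩) fun l₀ => ?_
  obtain ⟨t, ht, hev⟩ := exists_pos_eventually_mapsTo_cthickening (hattr l₀) (hφ l₀) (hA l₀) hc
  exact ⟨t, hev.mono fun l hl => ⟨t, ⟨ht, le_rfl⟩, hl⟩⟩

end UniformAttraction

namespace Semiflow

variable {X : Type*} [MetricSpace X] (σ : Semiflow X)

theorem S_nat_mul_eq_iterate {N : ℝ} (hN : 0 ≤ N) (n : ℕ) : σ.S (n * N) = (σ.S N)^[n] := by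
  induction n with
  | zero => funext x; simpa using σ.map_zero x
  | succ n ih =>
    funext x
    rw [Function.iterate_succ_apply', ← ih,
      show ((n + 1 : ℕ) : ℝ) * N = N + n * N by push_cast; ring, σ.map_add _ _ hN (by positivity)]

theorem mapsTo_cthickening_of_le {A B : Set X} {N M δ ε t : ℝ} (hN : 0 < N) (hM : 0 ≤ M)
    (hBN : MapsTo (σ.S N) B B) (hBM : MapsTo (σ.S M) B (B ∩ thickening δ A))
    (hA : ∀ τ ∈ Ico 0 N, MapsTo (σ.S τ) A A) (hAB : A ⊆ B)
    (hunif : ∀ τ ∈ Ico 0 N, ∀ x ∈ B, ∀ y ∈ B, dist x y < δ → dist (σ.S τ x) (σ.S τ y) < ε)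
    (hMt : M ≤ t) : MapsTo (σ.S t) B (cthickening ε A) := by
  obtain ⟨τ, hτ, m, hm⟩ := exists_mem_Ico_eq_add_nat_mul hN (sub_nonneg.2 hMt)
  have hmN : MapsTo (σ.S (m * N)) B B := by
    rw [σ.S_nat_mul_eq_iterate hN.le]; exact hBN.iterate m
  intro x hx
  rw [show t = τ + (M + m * N) by linarith, σ.map_add _ _ hτ.1 (by positivity),
    σ.map_add _ _ hM (by positivity)]
  exact mapsTo_inter_thickening_cthickening (hA τ hτ) hAB (hunif τ hτ) (hBM (hmN hx))

end Semiflow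

/-- Full equi-attraction: under (L1)–(L3) with `Λ` compact, if in addition
`S_λ(t)x` is continuous in `x` uniformly in `λ ∈ Λ`, for `x` in bounded sets
and `t ∈ [0,T]` for every `T > 0`, then continuity of `λ ↦ 𝒜_λ` implies
`sup_λ ρ(S_λ(t)D, 𝒜_λ) → 0` as `t → ∞` (over continuous time). -/
theorem full_equi_attraction_of_continuity {Λ X : Type*} [MetricSpace Λ]
    [CompactSpace Λ] [MetricSpace X] (S : Λ → Semiflow X) (𝒜 : Λ → Set X)
    (D : Set X)
    (hL1 : ∀ l : Λ, IsGlobalAttractor (S l) (𝒜 l))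
    (hL2 : Bornology.IsBounded D ∧ ∀ l : Λ, 𝒜 l ⊆ D)
    (hL3 : ∀ t : ℝ, 0 < t → ∀ B : Set X, Bornology.IsBounded B → ∀ l₀ : Λ,
      ∀ ε : ℝ, 0 < ε → ∃ δ : ℝ, 0 < δ ∧ ∀ l : Λ, dist l l₀ < δ →
        ∀ x ∈ B, dist ((S l).S t x) ((S l₀).S t x) < ε)
    (hunif : ∀ T : ℝ, 0 < T → ∀ B : Set X, Bornology.IsBounded B →
      ∀ ε : ℝ, 0 < ε → ∃ δ : ℝ, 0 < δ ∧ ∀ x ∈ B, ∀ y ∈ B, dist x y < δ →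
        ∀ l : Λ, ∀ τ ∈ Set.Icc (0 : ℝ) T, dist ((S l).S τ x) ((S l).S τ y) < ε)
    (hcont : ∀ l₀ : Λ, Tendsto (fun l => hausdorffEdist (𝒜 l) (𝒜 l₀)) (𝓝 l₀) (𝓝 0)) :
    Tendsto (fun t : ℝ => ⨆ l : Λ, rho ((S l).S t '' D) (𝒜 l)) atTop (𝓝 0) := by
  set B := cthickening 1 D
  have hB : Bornology.IsBounded B := hL2.1.cthickening
  have hAB : ∀ l, cthickening 1 (𝒜 l) ⊆ B := fun l => cthickening_subset_of_subset 1 (hL2.2 l)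
  have huniform : ∀ c > 0, ∀ᶠ H in atTop,
      ∀ l, ∃ t ∈ Ioc 0 H, MapsTo ((S l).S t) B (cthickening c (𝒜 l)) := fun c hc =>
    eventually_atTop_forall_exists_mapsTo_cthickening (fun l => (hL1 l).2.2 B hB)
      (fun l₀ t ht ε hε => Metric.eventually_nhds_iff.2 (hL3 t ht B hB l₀ ε hε)) hcont hc
  obtain ⟨H₁, hH₁, hH₁pos⟩ := ((huniform 1 one_pos).and (eventually_gt_atTop 0)).exists
  refine tendsto_iSup_rho_nhds_zero fun ε hε => ?_
  obtain ⟨δ, hδ, hδunif⟩ := hunif H₁ hH₁pos B hB ε hε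
  -- `c < δ` for the uniform continuity, `c ≤ 1` to stay inside `B`
  set c := min (δ / 2) 1
  obtain ⟨H₂, hH₂⟩ := (huniform c (by positivity)).exists
  filter_upwards [eventually_ge_atTop H₂] with t ht l
  obtain ⟨N, hN, hBN⟩ := hH₁ l
  obtain ⟨M, hM, hBM⟩ := hH₂ l
  have hcδ : c < δ := (min_le_left _ _).trans_lt (half_lt_self hδ)
  have hBN' : MapsTo ((S l).S N) B B := hBN.mono_right (hAB l)
  have hBM' : MapsTo ((S l).S M) B (B ∩ thickening δ (𝒜 l)) := fun x hx =>
    ⟨hAB l (cthickening_mono (min_le_right _ _) _ (hBM hx)),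
      cthickening_subset_thickening' hδ hcδ _ (hBM hx)⟩
  have hinv : ∀ τ ∈ Ico 0 N, MapsTo ((S l).S τ) (𝒜 l) (𝒜 l) := fun τ hτ =>
    (mapsTo_image _ _).mono_right ((hL1 l).2.1 τ hτ.1).le
  refine MapsTo.image_subset <| ((S l).mapsTo_cthickening_of_le hN.1 hM.1.le hBN' hBM' hinv
    ((self_subset_cthickening _).trans (hAB l))
    (fun τ hτ x hx y hy hxy => hδunif x hx y hy hxy l τ ⟨hτ.1, hτ.2.le.trans hN.2⟩)
    (hM.2.trans ht)).mono_left (self_subset_cthickening D)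
end
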